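/- Let f : Ω → ℂ be a nonvanishing scalar C¹ function on an open set Ω ⊆ ℝ³. If W = W₀ + 𝐖 : Ω → ℍ(ℂ) is a C¹ solution of the main Vekua equation VW = 0, then the derivative Ẇ = V̄W satisfies V̄W = 2f·Σ_{k=1}^{3} ∂_k(W₀/f) e_k, i.e. f·Ẇ = 2f²·∇(W₀/f) as a purely vectorial quaternion-valued function. -/

import Mathlib

/-!
Adding `VW = 0` to `V̄W` makes the operators symmetric: `D_r W + D W = 2(∇W₀ - div 𝐖)`, and for
the pure vector `a = Df/f` the anticommutator is `a C_H W + C_H W a = 2W₀a + 2⟨a, 𝐖⟩`. The scalar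
parts recombine into `2 Sc(VW) = 0`, so `V̄W = 2(∇W₀ - W₀ Df/f)`, which is `2f∇(W₀/f)` by the
quotient rule.
-/

open Quaternion

noncomputable section

/-- Points of ℝ³. -/
abbrev P3 := EuclideanSpace ℝ (Fin 3)

/-- Partial derivative ∂ₖ of a complex-valued function on ℝ³. -/
def pd (k : Fin 3) (F : P3 → ℂ) : P3 → ℂ :=
  fun p => fderiv ℝ F p (EuclideanSpace.single k 1)

/-- The Laplacian Δ = ∂₁² + ∂₂² + ∂₃². -/
def lap3 (F : P3 → ℂ) : P3 → ℂ := fun p => ∑ k : Fin 3, pd k (pd k F) p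

/-- Embedding of a complex scalar as a quaternion. -/
def qC (z : ℂ) : ℍ[ℂ] := ⟨z, 0, 0, 0⟩

/-- The quaternionic imaginary units e₁, e₂, e₃. -/
def qe : Fin 3 → ℍ[ℂ] := ![⟨0,1,0,0⟩, ⟨0,0,1,0⟩, ⟨0,0,0,1⟩]

/-- The eₖ-components of a quaternion. -/
def qcomp : Fin 3 → ℍ[ℂ] → ℂ := ![QuaternionAlgebra.imI, QuaternionAlgebra.imJ, QuaternionAlgebra.imK]

/-- Quaternionic conjugation C_H. -/
def CH (q : ℍ[ℂ]) : ℍ[ℂ] := ⟨q.re, -q.imI, -q.imJ, -q.imK⟩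

/-- Componentwise partial derivative of a quaternion-valued function. -/
def pdq (k : Fin 3) (W : P3 → ℍ[ℂ]) : P3 → ℍ[ℂ] :=
  fun p => ⟨pd k (fun x => (W x).re) p, pd k (fun x => (W x).imI) p,
            pd k (fun x => (W x).imJ) p, pd k (fun x => (W x).imK) p⟩

/-- The Dirac (Moisil–Theodorescu) operator D Q = Σₖ eₖ ∂ₖ Q. -/
def Dq (W : P3 → ℍ[ℂ]) : P3 → ℍ[ℂ] := fun p => ∑ k : Fin 3, qe k * pdq k W p

/-- The right Dirac operator Dᵣ Q = Σₖ (∂ₖ Q) eₖ. -/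
def Drq (W : P3 → ℍ[ℂ]) : P3 → ℍ[ℂ] := fun p => ∑ k : Fin 3, pdq k W p * qe k

/-- Gradient of a scalar function viewed as a purely vectorial quaternion. -/
def gradq (F : P3 → ℂ) : P3 → ℍ[ℂ] := fun p => ⟨0, pd 0 F p, pd 1 F p, pd 2 F p⟩

/-- Divergence of (the vector part of) a quaternion-valued function. -/
def divq (W : P3 → ℍ[ℂ]) : P3 → ℂ :=
  fun p => pd 0 (fun x => (W x).imI) p + pd 1 (fun x => (W x).imJ) p + pd 2 (fun x => (W x).imK) p

/-- Rotor (curl) of (the vector part of) a quaternion-valued function. -/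
def rotq (W : P3 → ℍ[ℂ]) : P3 → ℍ[ℂ] :=
  fun p => ⟨0,
    pd 1 (fun x => (W x).imK) p - pd 2 (fun x => (W x).imJ) p,
    pd 2 (fun x => (W x).imI) p - pd 0 (fun x => (W x).imK) p,
    pd 0 (fun x => (W x).imJ) p - pd 1 (fun x => (W x).imI) p⟩

/-- Cross product of the vector parts of two quaternions. -/
def crossq (u v : ℍ[ℂ]) : ℍ[ℂ] :=
  ⟨0, u.imJ * v.imK - u.imK * v.imJ, u.imK * v.imI - u.imI * v.imK, u.imI * v.imJ - u.imJ * v.imI⟩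

/-- Bilinear scalar product of the vector parts of two quaternions. -/
def dotq (u v : ℍ[ℂ]) : ℂ := u.imI * v.imI + u.imJ * v.imJ + u.imK * v.imK

/-- `Cⁿ` smoothness of a quaternion-valued function on a set, componentwise. -/
def QContDiffOn (n : ℕ) (W : P3 → ℍ[ℂ]) (Ω : Set P3) : Prop :=
  ContDiffOn ℝ n (fun p => (W p).re) Ω ∧ ContDiffOn ℝ n (fun p => (W p).imI) Ω ∧
  ContDiffOn ℝ n (fun p => (W p).imJ) Ω ∧ ContDiffOn ℝ n (fun p => (W p).imK) Ω

/-- The pure-quaternion Df/f built from a nonvanishing scalar function f. -/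
def DfF (f : P3 → ℂ) : P3 → ℍ[ℂ] := fun p => (f p)⁻¹ • gradq f p

/- The `Quaternion` projection lemmas are applied before unfolding `qe`, `CH`, `qC`, ...: once
unfolded, these are anonymous constructors of `QuaternionAlgebra ℂ (-1) 0 (-1)`, on which the
`ℍ[ℂ]` simp lemmas no longer fire. -/

lemma Drq_add_Dq (W : P3 → ℍ[ℂ]) (p : P3) :
    Drq W p + Dq W p = (2 : ℂ) • (gradq (fun x => (W x).re) p - qC (divq W p)) := by
  ext <;> simp only [Drq, Dq, Fin.sum_univ_three, Quaternion.re_add, Quaternion.imI_add,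
    Quaternion.imJ_add, Quaternion.imK_add, Quaternion.re_sub, Quaternion.imI_sub,
    Quaternion.imJ_sub, Quaternion.imK_sub, Quaternion.re_mul, Quaternion.imI_mul,
    Quaternion.imJ_mul, Quaternion.imK_mul, Quaternion.re_smul, Quaternion.imI_smul,
    Quaternion.imJ_smul, Quaternion.imK_smul] <;>
    simp [qe, pdq, gradq, qC, divq] <;> ring

lemma re_Dq (W : P3 → ℍ[ℂ]) (p : P3) : (Dq W p).re = -divq W p := by
  simp only [Dq, Fin.sum_univ_three, Quaternion.re_add, Quaternion.re_mul]
  simp [qe, pdq, divq]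
  ring

lemma mul_CH_add_CH_mul {a : ℍ[ℂ]} (ha : a.re = 0) (q : ℍ[ℂ]) :
    a * CH q + CH q * a = (2 * q.re) • a + qC (2 * dotq a q) := by
  ext <;> simp only [Quaternion.re_add, Quaternion.imI_add, Quaternion.imJ_add, Quaternion.imK_add,
    Quaternion.re_mul, Quaternion.imI_mul, Quaternion.imJ_mul, Quaternion.imK_mul,
    Quaternion.re_smul, Quaternion.imI_smul, Quaternion.imJ_smul, Quaternion.imK_smul] <;>
    simp [CH, qC, dotq, ha] <;> ring

lemma re_mul_CH {a : ℍ[ℂ]} (ha : a.re = 0) (q : ℍ[ℂ]) : (a * CH q).re = dotq a q := by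
  simp only [Quaternion.re_mul]
  simp [CH, dotq, ha]

lemma Drq_sub_CH_mul {a : ℍ[ℂ]} (ha : a.re = 0) (W : P3 → ℍ[ℂ]) (p : P3) :
    Drq W p - CH (W p) * a =
      (2 : ℂ) • (gradq (fun x => (W x).re) p - (W p).re • a)
        + qC (2 * (Dq W p - a * CH (W p)).re) - (Dq W p - a * CH (W p)) := by
  rw [Quaternion.re_sub, re_Dq, re_mul_CH ha]
  calc Drq W p - CH (W p) * a
      = (Drq W p + Dq W p) - (a * CH (W p) + CH (W p) * a) - (Dq W p - a * CH (W p)) := by abel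
    _ = (2 : ℂ) • (gradq (fun x => (W x).re) p - qC (divq W p))
          - ((2 * (W p).re) • a + qC (2 * dotq a (W p))) - (Dq W p - a * CH (W p)) := by
        rw [Drq_add_Dq, mul_CH_add_CH_mul ha]
    _ = _ := by
        congr 1
        ext <;> simp only [Quaternion.re_add, Quaternion.imI_add, Quaternion.imJ_add,
          Quaternion.imK_add, Quaternion.re_sub, Quaternion.imI_sub, Quaternion.imJ_sub,
          Quaternion.imK_sub, Quaternion.re_smul, Quaternion.imI_smul, Quaternion.imJ_smul,
          Quaternion.imK_smul] <;> simp [qC] <;> ring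

lemma pd_mul {g h : P3 → ℂ} {p : P3} (hg : DifferentiableAt ℝ g p) (hh : DifferentiableAt ℝ h p)
    (k : Fin 3) : pd k (fun x => g x * h x) p = g p * pd k h p + h p * pd k g p := by
  simp [pd, fderiv_fun_mul hg hh]

lemma pd_inv {f : P3 → ℂ} {p : P3} (hf : DifferentiableAt ℝ f p) (hf0 : f p ≠ 0) (k : Fin 3) :
    pd k (fun x => (f x)⁻¹) p = -(pd k f p / f p ^ 2) := by
  change fderiv ℝ (Inv.inv ∘ f) p _ = _
  rw [((hasFDerivAt_inv' (𝕜 := ℝ) hf0).comp p hf.hasFDerivAt).fderiv]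
  simp [pd]
  field_simp

lemma pd_div {g f : P3 → ℂ} {p : P3} (hg : DifferentiableAt ℝ g p) (hf : DifferentiableAt ℝ f p)
    (hf0 : f p ≠ 0) (k : Fin 3) :
    pd k (fun x => g x / f x) p = (pd k g p - g p * pd k f p / f p) / f p := by
  simp only [div_eq_mul_inv]
  rw [pd_mul hg (hf.fun_inv hf0), pd_inv hf hf0]
  field_simp
  ring

lemma gradq_div {g f : P3 → ℂ} {p : P3} (hg : DifferentiableAt ℝ g p)
    (hf : DifferentiableAt ℝ f p) (hf0 : f p ≠ 0) :
    gradq (fun x => g x / f x) p = (f p)⁻¹ • (gradq g p - g p • DfF f p) := by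
  ext <;> simp only [DfF, Quaternion.re_smul, Quaternion.imI_smul, Quaternion.imJ_smul,
    Quaternion.imK_smul, Quaternion.re_sub, Quaternion.imI_sub, Quaternion.imJ_sub,
    Quaternion.imK_sub] <;> simp [gradq, pd_div hg hf hf0] <;> field_simp

lemma re_DfF (f : P3 → ℂ) (p : P3) : (DfF f p).re = 0 := by
  simp only [DfF, Quaternion.re_smul]
  simp [gradq]

/-- for a solution W = W₀ + 𝐖 of VW = 0, the derivative satisfies
    V̄W = 2f∇(W₀/f), i.e. f·Ẇ = 2f²·∇(W₀/f). -/
theorem statement11 (Ω : Set P3) (hΩ : IsOpen Ω)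
    (f : P3 → ℂ) (hf : ContDiffOn ℝ 1 f Ω) (hf0 : ∀ p ∈ Ω, f p ≠ 0)
    (W : P3 → ℍ[ℂ]) (hW : QContDiffOn 1 W Ω)
    (hVek : ∀ p ∈ Ω, Dq W p - DfF f p * CH (W p) = 0) :
    ∀ p ∈ Ω,
      (Drq W p - CH (W p) * DfF f p
        = (2 * f p) • gradq (fun x => (W x).re / f x) p) ∧
      (f p • (Drq W p - CH (W p) * DfF f p)
        = (2 * (f p) ^ 2) • gradq (fun x => (W x).re / f x) p) := by
  intro p hp
  have hfp0 : f p ≠ 0 := hf0 p hp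
  have hfp : DifferentiableAt ℝ f p :=
    (hf.differentiableOn one_ne_zero p hp).differentiableAt (hΩ.mem_nhds hp)
  have hWp : DifferentiableAt ℝ (fun x => (W x).re) p :=
    (hW.1.differentiableOn one_ne_zero p hp).differentiableAt (hΩ.mem_nhds hp)
  have hVbar : Drq W p - CH (W p) * DfF f p
      = (2 : ℂ) • (gradq (fun x => (W x).re) p - (W p).re • DfF f p) := by
    rw [Drq_sub_CH_mul (re_DfF f p), hVek p hp]
    simp [show qC 0 = 0 from rfl]
  rw [hVbar, gradq_div hWp hfp hfp0, smul_smul, smul_smul, smul_smul]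
  constructor <;> congr 1 <;> field_simp
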